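/- arXiv:1509.09162 — 3 statements merged into one kernel-verified Lean document; each statement's English description precedes it below -/
import Mathlib

section
/- Let m ≥ 2 be an integer, let p₁,…,p_m ∈ [1,∞] with Σ_j 1/p_j ≤ 1/2, and let r₁,…,r_m ∈ (0,2] satisfy Σ_j 1/r_j > (m+1)/2 − Σ_j 1/p_j. Then there exist s₁,…,s_m ∈ [(1 − Σ_j 1/p_j)^{-1}, 2] with s_j ≥ r_j for all j and Σ_j 1/s_j = (m+1)/2 − Σ_j 1/p_j. -/
open scoped ENNReal

/-- Lemma 2 of Albuquerque–Nogueira–Núñez-Alarcón–Pellegrino–Rueda: existence of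
intermediate exponents `s_j`. -/
theorem stmt2 (m : ℕ) (hm : 2 ≤ m) (p : Fin m → ℝ≥0∞) (hp : ∀ j, 1 ≤ p j)
    (hP : ∑ j, (p j)⁻¹ ≤ 1 / 2) (r : Fin m → ℝ)
    (hr : ∀ j, 0 < r j ∧ r j ≤ 2)
    (hsum : ((m : ℝ) + 1) / 2 - (∑ j, (p j)⁻¹).toReal < ∑ j, 1 / r j) :
    ∃ s : Fin m → ℝ,
      (∀ j, (1 - (∑ j, (p j)⁻¹).toReal)⁻¹ ≤ s j ∧ s j ≤ 2 ∧ r j ≤ s j) ∧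
      ∑ j, 1 / s j = ((m : ℝ) + 1) / 2 - (∑ j, (p j)⁻¹).toReal := by
  set P : ℝ := (∑ j, (p j)⁻¹).toReal with hPdef
  have hP2 : P ≤ 1 / 2 := by
    have h := ENNReal.toReal_mono (by norm_num : (1 / 2 : ℝ≥0∞) ≠ ⊤) hP
    rw [hPdef]
    calc (∑ j, (p j)⁻¹).toReal ≤ ((1:ℝ≥0∞)/2).toReal := h
      _ = 1/2 := by norm_num
  have hP0 : 0 ≤ P := ENNReal.toReal_nonneg
  set T : ℝ := ((m : ℝ) + 1) / 2 - P with hT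
  have hm2 : (2 : ℝ) ≤ m := by exact_mod_cast hm
  set u : Fin m → ℝ := fun j => min (1 - P) (1 / r j) with hu
  have hrhalf : ∀ j, (1 : ℝ) / 2 ≤ 1 / r j := by
    intro j
    obtain ⟨h1, h2⟩ := hr j
    rw [div_le_div_iff₀ (by norm_num) h1]
    linarith
  have h1P : (1 : ℝ) / 2 ≤ 1 - P := by linarith
  have huhalf : ∀ j, (1 : ℝ) / 2 ≤ u j := fun j => le_min h1P (hrhalf j)
  set L : ℝ := (m : ℝ) / 2 with hL
  set U : ℝ := ∑ j, u j with hU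
  have hLU : L ≤ U := by
    have h : ∑ _j : Fin m, (1 : ℝ) / 2 ≤ U := Finset.sum_le_sum fun j _ => huhalf j
    simpa [hL, Finset.sum_const, mul_comm, mul_one_div, div_eq_mul_inv] using h
  have hLT : L ≤ T := by rw [hL, hT]; linarith
  have hTU : T ≤ U := by
    by_cases hcase : ∀ j, 1 / r j ≤ 1 - P
    · have hUe : U = ∑ j, 1 / r j :=
        Finset.sum_congr rfl fun j _ => min_eq_right (hcase j)
      rw [hUe]; exact le_of_lt hsum
    · push_neg at hcase
      obtain ⟨j0, hj0⟩ := hcase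
      have huj0 : u j0 = 1 - P := min_eq_left (le_of_lt hj0)
      have hsplit : U = u j0 + ∑ j ∈ Finset.univ.erase j0, u j :=
        (Finset.add_sum_erase _ u (Finset.mem_univ j0)).symm
      have hcard : (Finset.univ.erase j0).card = m - 1 := by
        rw [Finset.card_erase_of_mem (Finset.mem_univ j0), Finset.card_univ,
          Fintype.card_fin]
      have hrest : ((m : ℝ) - 1) / 2 ≤ ∑ j ∈ Finset.univ.erase j0, u j := by
        have h : ∑ _j ∈ Finset.univ.erase j0, (1 : ℝ) / 2
            ≤ ∑ j ∈ Finset.univ.erase j0, u j :=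
          Finset.sum_le_sum fun j _ => huhalf j
        have hc : ((Finset.univ.erase j0).card : ℝ) = (m : ℝ) - 1 := by
          rw [hcard]
          have : (1 : ℕ) ≤ m := by omega
          push_cast [Nat.cast_sub this]
          ring
        calc ((m : ℝ) - 1) / 2 = ((Finset.univ.erase j0).card : ℝ) * (1 / 2) := by
              rw [hc]; ring
          _ = ∑ _j ∈ Finset.univ.erase j0, (1 : ℝ) / 2 := by
              rw [Finset.sum_const, nsmul_eq_mul]
          _ ≤ _ := h
      rw [hsplit, huj0, hT]
      linarith
  set c : ℝ := (T - L) / (U - L) with hc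
  have hc0 : 0 ≤ c := div_nonneg (by linarith) (by linarith)
  have hc1 : c ≤ 1 := by
    rcases eq_or_lt_of_le hLU with h | h
    · have : T = L := le_antisymm (h ▸ hTU) hLT
      rw [hc, this]; simp
    · rw [hc, div_le_one (by linarith)]; linarith
  set t : Fin m → ℝ := fun j => 1 / 2 + c * (u j - 1 / 2) with ht
  have hthalf : ∀ j, (1 : ℝ) / 2 ≤ t j := by
    intro j
    have := mul_nonneg hc0 (by linarith [huhalf j] : (0:ℝ) ≤ u j - 1/2)
    rw [ht]; dsimp only; linarith
  have htu : ∀ j, t j ≤ u j := by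
    intro j
    have h1 : c * (u j - 1/2) ≤ 1 * (u j - 1/2) :=
      mul_le_mul_of_nonneg_right hc1 (by linarith [huhalf j])
    rw [ht]; dsimp only; linarith
  have htpos : ∀ j, 0 < t j := fun j => lt_of_lt_of_le (by norm_num) (hthalf j)
  have htsum : ∑ j, t j = T := by
    have h1 : ∑ j, t j = L + c * (U - L) := by
      rw [ht, hU, hL]
      rw [Finset.sum_add_distrib, ← Finset.mul_sum, Finset.sum_sub_distrib]
      simp [Finset.sum_const, Finset.card_univ, nsmul_eq_mul]
      ring
    rcases eq_or_lt_of_le hLU with h | h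
    · have hTL : T = L := le_antisymm (h ▸ hTU) hLT
      rw [h1, ← h, hTL]; ring
    · rw [h1, hc, div_mul_cancel₀]
      · ring
      · linarith
  refine ⟨fun j => (t j)⁻¹, fun j => ?_, ?_⟩
  · have ht1P : t j ≤ 1 - P := le_trans (htu j) (min_le_left _ _)
    have htr : t j ≤ (r j)⁻¹ := by
      have := le_trans (htu j) (min_le_right _ _)
      rwa [one_div] at this
    refine ⟨?_, ?_, ?_⟩
    · exact inv_anti₀ (htpos j) ht1P
    · calc (t j)⁻¹ ≤ ((1:ℝ)/2)⁻¹ := inv_anti₀ (by norm_num) (hthalf j)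
        _ = 2 := by norm_num
    · have := inv_anti₀ (htpos j) htr
      rwa [inv_inv] at this
  · have heq : ∀ j : Fin m, 1 / (t j)⁻¹ = t j := fun j => by rw [one_div, inv_inv]
    rw [Finset.sum_congr rfl fun j _ => heq j]
    exact htsum
end

section
/- Let p ∈ [1,∞] and r ∈ (0,∞) with r < p′, where p′ is the conjugate exponent of p. The exponent max{1/r − 1/p′, 0} = 1/r − 1/p′ in the linear inequality (Σ_{i=1}^n |T(e_i)|^r)^{1/r} ≤ C · n^t · ‖T‖ is optimal: if there is a constant C ≥ 1 and t ≥ 0 such that the inequality holds for all n and all linear functionals T : ℓ_p^n → ℂ, then t ≥ 1/r − 1/p′. -/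
open scoped ENNReal NNReal
open Filter

/-! The functional `T x = ∑ i, x i` on `ℓ_p^n` takes the value `1` at every `e_i`, so the left-hand
side of the inequality is `n ^ (1 / r)`, while Hölder's inequality gives `‖T‖ ≤ n ^ (1 / p')`.
Hence `n ^ (1 / r) ≤ C * n ^ (t + 1 / p')` for every `n`, which forces `1 / r ≤ t + 1 / p'`. -/

namespace PiLp

variable {ι : Type*} [Fintype ι] (p : ℝ≥0∞) [Fact (1 ≤ p)]

theorem sum_norm_le_card_rpow_mul_norm {β : ι → Type*} [∀ i, SeminormedAddCommGroup (β i)]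
    (x : PiLp p β) :
    ∑ i, ‖x i‖ ≤ (Fintype.card ι : ℝ) ^ (1 - p.toReal⁻¹) * ‖x‖ := by
  rcases eq_or_ne p ∞ with rfl | hp
  · calc ∑ i, ‖x i‖ ≤ ∑ _i : ι, ‖x‖ := Finset.sum_le_sum fun i _ => norm_apply_le x i
      _ = (Fintype.card ι : ℝ) ^ (1 - (∞ : ℝ≥0∞).toReal⁻¹) * ‖x‖ := by simp
  set q := p.toReal
  have hq : 1 ≤ q := by simpa using ENNReal.toReal_mono hp (Fact.out : 1 ≤ p)
  have hq0 : q ≠ 0 := by positivity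
  have hpow := NNReal.rpow_sum_le_const_mul_sum_rpow Finset.univ (fun i => ‖x i‖₊) hq
  have hnnnorm : ∑ i, ‖x i‖₊ ≤ (Fintype.card ι : ℝ≥0) ^ (1 - q⁻¹) * ‖x‖₊ := by
    calc ∑ i, ‖x i‖₊ = ((∑ i, ‖x i‖₊) ^ q) ^ q⁻¹ := (NNReal.rpow_rpow_inv hq0 _).symm
      _ ≤ ((Fintype.card ι : ℝ≥0) ^ (q - 1) * ∑ i, ‖x i‖₊ ^ q) ^ q⁻¹ := by gcongr; simpa using hpow
      _ = (Fintype.card ι : ℝ≥0) ^ (1 - q⁻¹) * ‖x‖₊ := by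
        rw [NNReal.mul_rpow, ← NNReal.rpow_mul, nnnorm_eq_sum hp, one_div]
        congr 2
        field_simp
  simpa using NNReal.coe_le_coe.2 hnnnorm

variable {𝕜 E : Type*} [NontriviallyNormedField 𝕜] [NormedAddCommGroup E] [NormedSpace 𝕜 E]

theorem norm_sum_proj_le :
    ‖∑ i, proj p (𝕜 := 𝕜) (fun _ : ι => E) i‖ ≤ (Fintype.card ι : ℝ) ^ (1 - p.toReal⁻¹) := by
  refine ContinuousLinearMap.opNorm_le_bound _ (by positivity) fun x => ?_
  calc ‖(∑ i, proj p (𝕜 := 𝕜) (fun _ : ι => E) i) x‖ = ‖∑ i, x i‖ := by simp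
    _ ≤ ∑ i, ‖x i‖ := norm_sum_le _ _
    _ ≤ _ := sum_norm_le_card_rpow_mul_norm p x

end PiLp

-- `p.toReal⁻¹` is the junk value `0⁻¹ = 0` at `p = ∞`, which is the correct value of `1 / p` there.
theorem ENNReal.toReal_one_div_of_one_div_add_one_div_eq_one {p p' : ℝ≥0∞} (hp : 1 ≤ p)
    (hc : 1 / p + 1 / p' = 1) : (1 / p').toReal = 1 - p.toReal⁻¹ := by
  have hle : 1 / p ≤ 1 := ENNReal.div_le_of_le_mul (by simpa using hp)
  have hp' : 1 / p' = 1 - 1 / p :=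
    ENNReal.eq_sub_of_add_eq (ne_top_of_le_ne_top ENNReal.one_ne_top hle) ((add_comm _ _).trans hc)
  rw [hp', ENNReal.toReal_sub_of_le hle ENNReal.one_ne_top, one_div, ENNReal.toReal_inv,
    ENNReal.toReal_one]

theorem le_of_eventually_natCast_rpow_le_mul_rpow {a b C : ℝ}
    (h : ∀ᶠ n : ℕ in atTop, (n : ℝ) ^ a ≤ C * (n : ℝ) ^ b) : a ≤ b := by
  by_contra! hba
  have hlarge : Tendsto (fun n : ℕ => (n : ℝ) ^ (a - b)) atTop atTop :=
    (tendsto_rpow_atTop (sub_pos.2 hba)).comp tendsto_natCast_atTop_atTop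
  obtain ⟨n, hn, hCn, hpos⟩ :=
    (h.and ((hlarge.eventually_gt_atTop C).and (eventually_gt_atTop 0))).exists
  have hn0 : (0 : ℝ) < n := Nat.cast_pos.2 hpos
  have : C * (n : ℝ) ^ b < (n : ℝ) ^ a := by
    rw [← sub_add_cancel a b, Real.rpow_add hn0]
    exact mul_lt_mul_of_pos_right hCn (by positivity)
  exact hn.not_gt this

theorem stmt4_general (p p' : ℝ≥0∞) [Fact (1 ≤ p)] (hc : 1 / p + 1 / p' = 1)
    (r : ℝ)
    (C t : ℝ) (hC : 1 ≤ C)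
    (h : ∀ (n : ℕ) (T : PiLp p (fun _ : Fin n => ℂ) →L[ℂ] ℂ),
      (∑ i : Fin n, ‖T (WithLp.toLp p (Pi.single i 1))‖ ^ r) ^ (1 / r) ≤ C * (n : ℝ) ^ t * ‖T‖) :
    1 / r - (1 / p').toReal ≤ t := by
  rw [ENNReal.toReal_one_div_of_one_div_add_one_div_eq_one Fact.out hc, sub_le_iff_le_add]
  refine le_of_eventually_natCast_rpow_le_mul_rpow (C := C) ?_
  filter_upwards [eventually_gt_atTop 0] with n hn
  set T := ∑ i, PiLp.proj p (𝕜 := ℂ) (fun _ : Fin n => ℂ) i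
  calc (n : ℝ) ^ (1 / r) = (∑ i : Fin n, ‖T (WithLp.toLp p (Pi.single i 1))‖ ^ r) ^ (1 / r) := by
        simp [T]
    _ ≤ C * (n : ℝ) ^ t * ‖T‖ := h n T
    _ ≤ C * (n : ℝ) ^ t * (n : ℝ) ^ (1 - p.toReal⁻¹) := by
        refine mul_le_mul_of_nonneg_left ?_ (mul_nonneg (by linarith) (by positivity))
        simpa using PiLp.norm_sum_proj_le (ι := Fin n) (𝕜 := ℂ) (E := ℂ) p
    _ = C * (n : ℝ) ^ (t + (1 - p.toReal⁻¹)) := by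
        rw [Real.rpow_add (Nat.cast_pos.2 hn), mul_assoc]

/-- Optimality of the exponent `1/r - 1/p'` in the linear inequality. -/
theorem stmt4 (p p' : ℝ≥0∞) [Fact (1 ≤ p)] (hc : 1 / p + 1 / p' = 1)
    (r : ℝ) (hr : 0 < r) (hrp' : ENNReal.ofReal r < p')
    (C t : ℝ) (hC : 1 ≤ C) (ht : 0 ≤ t)
    (h : ∀ (n : ℕ) (T : PiLp p (fun _ : Fin n => ℂ) →L[ℂ] ℂ),
      (∑ i : Fin n, ‖T (WithLp.toLp p (Pi.single i 1))‖ ^ r) ^ (1 / r) ≤ C * (n : ℝ) ^ t * ‖T‖) :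
    1 / r - (1 / p').toReal ≤ t :=
  stmt4_general p p' hc r C t hC h
end

section
/- Let m ≥ 2, r₁,…,r_m ∈ (0,∞), p₁,…,p_m ∈ [2,∞], and suppose Σ_j 1/p_j ≤ 1/2 and 1/r_j ≥ (m+1−2Σ_j 1/p_j)/(2m) for all j = 1,…,m (i.e., all r_j are at most the Hardy–Littlewood exponent 2m/(m+1−2|1/p|)). Assume the generalized Hardy–Littlewood inequality: there is D ≥ 1 such that (Σ_{i₁,…,i_m=1}^n |T(e_{i₁},…,e_{i_m})|^{ρ})^{1/ρ} ≤ D‖T‖ with ρ = 2m/(m+1−2|1/p|) for all m-linear forms T : ℓ_{p₁}^n × ⋯ × ℓ_{p_m}^n → ℂ and all n. Then (Σ_{i₁}(…(Σ_{i_m}|T(e_{i₁},…,e_{i_m})|^{r_m})^{r_{m-1}/r_m}…)^{r₁/r₂})^{1/r₁} ≤ D · n^{s} · ‖T‖, where s = Σ_{j=1}^m 1/r_j + |1/p| − (m+1)/2. -/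
open scoped ENNReal

noncomputable def mixedSum {n : ℕ} : (m : ℕ) → (Fin m → ℝ) → ((Fin m → Fin n) → ℝ) → ℝ
  | 0, _, F => F finZeroElim
  | m + 1, r, F =>
      (∑ i : Fin n,
        (mixedSum m (fun j => r j.succ) (fun is => F (Fin.cons i is))) ^ r 0) ^ (1 / r 0)

/-! Hölder's inequality against the constant vector gives `‖a‖_r ≤ n ^ (1/r - 1/ρ) ‖a‖_ρ` for
nonnegative `a ∈ ℝⁿ` whenever `0 < r ≤ ρ`, and the hypothesis on the `r_j` says exactly that `r_j ≤ ρ` for the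
Hardy–Littlewood exponent `ρ`. Applying this comparison to the outermost sum and inducting on the
number of variables bounds the mixed `(r_1, …, r_m)`-sum by `n ^ ∑ (1/r_j - 1/ρ)` times the plain
`ℓ_ρ`-sum of the coefficients, which is at most `D ‖T‖`; finally `∑ (1/r_j - 1/ρ) = s`. -/

open Finset

theorem Fin.sum_univ_pi_succ {α M : Type*} [Fintype α] [AddCommMonoid M] {m : ℕ}
    (f : (Fin (m + 1) → α) → M) :
    ∑ x, f x = ∑ i, ∑ is : Fin m → α, f (Fin.cons i is) :=
  ((Fintype.sum_prod_type fun q : α × (Fin m → α) => f (Fin.cons q.1 q.2)).symm.trans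
    (Fintype.sum_equiv (Fin.consEquiv fun _ => α) _ _ fun _ => rfl)).symm

namespace Real

variable {ι : Type*} (s : Finset ι) {a b : ι → ℝ} {r ρ : ℝ}

theorem rpow_sum_rpow_le_mul_of_le_mul {C : ℝ} (hC : 0 ≤ C) (hr : 0 < r)
    (ha : ∀ i ∈ s, 0 ≤ a i) (hb : ∀ i ∈ s, 0 ≤ b i) (hab : ∀ i ∈ s, a i ≤ C * b i) :
    (∑ i ∈ s, a i ^ r) ^ (1 / r) ≤ C * (∑ i ∈ s, b i ^ r) ^ (1 / r) :=
  calc (∑ i ∈ s, a i ^ r) ^ (1 / r) ≤ (∑ i ∈ s, (C * b i) ^ r) ^ (1 / r) :=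
        rpow_le_rpow (sum_nonneg fun i hi => rpow_nonneg (ha i hi) r)
          (sum_le_sum fun i hi => rpow_le_rpow (ha i hi) (hab i hi) hr.le) (by positivity)
    _ = C * (∑ i ∈ s, b i ^ r) ^ (1 / r) := by
        rw [sum_congr rfl fun i hi => mul_rpow hC (hb i hi), ← mul_sum,
          mul_rpow (by positivity) (sum_nonneg fun i hi => rpow_nonneg (hb i hi) r),
          one_div, rpow_rpow_inv hC hr.ne']

theorem rpow_sum_rpow_le_card_rpow_mul (ha : ∀ i ∈ s, 0 ≤ a i) (hr : 0 < r) (hrρ : r ≤ ρ) :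
    (∑ i ∈ s, a i ^ r) ^ (1 / r) ≤
      (#s : ℝ) ^ (1 / r - 1 / ρ) * (∑ i ∈ s, a i ^ ρ) ^ (1 / ρ) := by
  have hρ : 0 < ρ := hr.trans_le hrρ
  have hpow := rpow_sum_le_const_mul_sum_rpow_of_nonneg s ((one_le_div hr).2 hrρ)
    (fun i hi => rpow_nonneg (ha i hi) r)
  have hexp : ∀ i ∈ s, (a i ^ r) ^ (ρ / r) = a i ^ ρ := fun i hi => by
    rw [← rpow_mul (ha i hi), mul_div_cancel₀ _ hr.ne']
  rw [sum_congr rfl hexp] at hpow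
  calc (∑ i ∈ s, a i ^ r) ^ (1 / r) = ((∑ i ∈ s, a i ^ r) ^ (ρ / r)) ^ (1 / ρ) := by
        rw [← rpow_mul (sum_nonneg fun i hi => rpow_nonneg (ha i hi) r)]
        field_simp
    _ ≤ ((#s : ℝ) ^ (ρ / r - 1) * ∑ i ∈ s, a i ^ ρ) ^ (1 / ρ) :=
        rpow_le_rpow (rpow_nonneg (sum_nonneg fun i hi => rpow_nonneg (ha i hi) r) _) hpow
          (by positivity)
    _ = (#s : ℝ) ^ (1 / r - 1 / ρ) * (∑ i ∈ s, a i ^ ρ) ^ (1 / ρ) := by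
        rw [mul_rpow (by positivity) (sum_nonneg fun i hi => rpow_nonneg (ha i hi) ρ),
          ← rpow_mul (by positivity)]
        congr 2
        field_simp

end Real

theorem mixedSum_nonneg {n : ℕ} : ∀ (m : ℕ) (r : Fin m → ℝ) {F : (Fin m → Fin n) → ℝ},
    (∀ i, 0 ≤ F i) → 0 ≤ mixedSum m r F
  | 0, _, _, hF => hF _
  | m + 1, _, _, hF =>
      Real.rpow_nonneg (sum_nonneg fun _ _ =>
        Real.rpow_nonneg (mixedSum_nonneg m _ fun _ => hF _) _) _

theorem mixedSum_le_card_rpow_mul {n : ℕ} {ρ : ℝ} (hρ : 0 < ρ) :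
    ∀ (m : ℕ) (r : Fin m → ℝ), (∀ j, 0 < r j) → (∀ j, r j ≤ ρ) →
    ∀ {F : (Fin m → Fin n) → ℝ}, (∀ i, 0 ≤ F i) →
      mixedSum m r F ≤ (n : ℝ) ^ (∑ j, (1 / r j - 1 / ρ)) * (∑ i, F i ^ ρ) ^ (1 / ρ)
  | 0, _, _, _, _, hF => by
      rw [mixedSum, Fintype.sum_subsingleton _ finZeroElim, one_div,
        Real.rpow_rpow_inv (hF _) hρ.ne']
      simp
  | m + 1, r, hr, hrρ, F, hF => by
      set C := (n : ℝ) ^ (∑ j : Fin m, (1 / r j.succ - 1 / ρ))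
      set a : Fin n → ℝ := fun i => (∑ is, F (Fin.cons i is) ^ ρ) ^ (1 / ρ)
      have hC : 0 ≤ C := by positivity
      have ha : ∀ i, 0 ≤ a i := fun i =>
        Real.rpow_nonneg (sum_nonneg fun _ _ => Real.rpow_nonneg (hF _) _) _
      have haρ : ∀ i, a i ^ ρ = ∑ is, F (Fin.cons i is) ^ ρ := fun i => by
        dsimp only [a]
        rw [one_div, Real.rpow_inv_rpow (sum_nonneg fun _ _ => Real.rpow_nonneg (hF _) _) hρ.ne']
      calc mixedSum (m + 1) r F ≤ C * (∑ i, a i ^ r 0) ^ (1 / r 0) :=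
            Real.rpow_sum_rpow_le_mul_of_le_mul univ hC (hr 0)
              (fun i _ => mixedSum_nonneg m _ fun _ => hF _) (fun i _ => ha i)
              (fun i _ => mixedSum_le_card_rpow_mul hρ m _ (fun j => hr j.succ)
                (fun j => hrρ j.succ) fun _ => hF _)
        _ ≤ C * ((n : ℝ) ^ (1 / r 0 - 1 / ρ) * (∑ i, a i ^ ρ) ^ (1 / ρ)) := by
            gcongr
            simpa using Real.rpow_sum_rpow_le_card_rpow_mul univ (fun i _ => ha i) (hr 0) (hrρ 0)
        _ = (n : ℝ) ^ (∑ j, (1 / r j - 1 / ρ)) * (∑ i, F i ^ ρ) ^ (1 / ρ) := by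
            obtain rfl | hn := n.eq_zero_or_pos
            · simp [Real.zero_rpow, hρ.ne']
            rw [Fin.sum_univ_pi_succ, Fin.sum_univ_succ (fun j => 1 / r j - 1 / ρ),
              Real.rpow_add (by positivity)]
            simp only [haρ]
            ring

theorem stmt10_general (m : ℕ) (hm : 2 ≤ m) (p : Fin m → ℝ≥0∞) [∀ j, Fact (1 ≤ p j)]
    (hp : ∑ j, (p j)⁻¹ ≤ 1 / 2)
    (r : Fin m → ℝ) (hr : ∀ j, 0 < r j)
    (hrHL : ∀ j, ((m : ℝ) + 1 - 2 * (∑ j, (p j)⁻¹).toReal) / (2 * m) ≤ 1 / r j)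
    (D : ℝ)
    (hHL : ∀ (n : ℕ)
      (T : ContinuousMultilinearMap ℂ (fun j : Fin m => PiLp (p j) (fun _ : Fin n => ℂ)) ℂ),
      (∑ i : Fin m → Fin n, ‖T (fun j => WithLp.toLp (p j) (Pi.single (i j) 1))‖ ^
          (2 * (m : ℝ) / ((m : ℝ) + 1 - 2 * (∑ j, (p j)⁻¹).toReal))) ^
        (((m : ℝ) + 1 - 2 * (∑ j, (p j)⁻¹).toReal) / (2 * m)) ≤ D * ‖T‖)
    (n : ℕ)
    (T : ContinuousMultilinearMap ℂ (fun j : Fin m => PiLp (p j) (fun _ : Fin n => ℂ)) ℂ) :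
    mixedSum m r (fun i => ‖T (fun j => WithLp.toLp (p j) (Pi.single (i j) 1))‖) ≤
      D * (n : ℝ) ^ ((∑ j, 1 / r j) + (∑ j, (p j)⁻¹).toReal - ((m : ℝ) + 1) / 2) * ‖T‖ := by
  set t := (∑ j, (p j)⁻¹).toReal
  have ht : t ≤ 1 / 2 := by simpa using ENNReal.toReal_mono (by simp) hp
  have hm' : (2 : ℝ) ≤ m := by exact_mod_cast hm
  set ρ := 2 * (m : ℝ) / ((m : ℝ) + 1 - 2 * t)
  have hρ : 0 < ρ := div_pos (by linarith) (by linarith)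
  have hρ_inv : 1 / ρ = ((m : ℝ) + 1 - 2 * t) / (2 * m) := one_div_div _ _
  have hrρ : ∀ j, r j ≤ ρ := fun j => le_of_one_div_le_one_div hρ (hρ_inv ▸ hrHL j)
  calc _ ≤ (n : ℝ) ^ (∑ j, (1 / r j - 1 / ρ)) *
        (∑ i : Fin m → Fin n, ‖T (fun j => WithLp.toLp (p j) (Pi.single (i j) 1))‖ ^ ρ) ^
          (1 / ρ) :=
        mixedSum_le_card_rpow_mul hρ m r hr hrρ fun _ => norm_nonneg _
    _ ≤ (n : ℝ) ^ (∑ j, (1 / r j - 1 / ρ)) * (D * ‖T‖) := by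
        gcongr
        exact hρ_inv ▸ hHL n T
    _ = _ := by
        have hm0 : (m : ℝ) ≠ 0 := by positivity
        have hexp : ∑ j, (1 / r j - 1 / ρ) = (∑ j, 1 / r j) + t - ((m : ℝ) + 1) / 2 := by
          rw [sum_sub_distrib, sum_const, card_univ, Fintype.card_fin, nsmul_eq_mul, hρ_inv]
          field_simp
          ring
        rw [hexp]
        ring

/-- The case `M_<^{HL} = {1,…,m}`: from the generalized Hardy–Littlewood inequality with
exponent `ρ = 2m/(m+1-2|1/p|)` one deduces the mixed-sum inequality with
`n^s`, `s = ∑ 1/r_j + |1/p| - (m+1)/2`. -/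
theorem stmt10 (m : ℕ) (hm : 2 ≤ m) (p : Fin m → ℝ≥0∞) [∀ j, Fact (1 ≤ p j)]
    (hp2 : ∀ j, 2 ≤ p j) (hp : ∑ j, (p j)⁻¹ ≤ 1 / 2)
    (r : Fin m → ℝ) (hr : ∀ j, 0 < r j)
    (hrHL : ∀ j, ((m : ℝ) + 1 - 2 * (∑ j, (p j)⁻¹).toReal) / (2 * m) ≤ 1 / r j)
    (D : ℝ) (hD : 1 ≤ D)
    (hHL : ∀ (n : ℕ)
      (T : ContinuousMultilinearMap ℂ (fun j : Fin m => PiLp (p j) (fun _ : Fin n => ℂ)) ℂ),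
      (∑ i : Fin m → Fin n, ‖T (fun j => WithLp.toLp (p j) (Pi.single (i j) 1))‖ ^
          (2 * (m : ℝ) / ((m : ℝ) + 1 - 2 * (∑ j, (p j)⁻¹).toReal))) ^
        (((m : ℝ) + 1 - 2 * (∑ j, (p j)⁻¹).toReal) / (2 * m)) ≤ D * ‖T‖)
    (n : ℕ)
    (T : ContinuousMultilinearMap ℂ (fun j : Fin m => PiLp (p j) (fun _ : Fin n => ℂ)) ℂ) :
    mixedSum m r (fun i => ‖T (fun j => WithLp.toLp (p j) (Pi.single (i j) 1))‖) ≤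
      D * (n : ℝ) ^ ((∑ j, 1 / r j) + (∑ j, (p j)⁻¹).toReal - ((m : ℝ) + 1) / 2) * ‖T‖ :=
  stmt10_general m hm p hp r hr hrHL D hHL n T
end
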